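/- arXiv:math/0612707 — 2 statements merged into one kernel-verified Lean document; each statement's English description precedes it below -/
import Mathlib

section
/- Let (ψ_j)_{j≥1} be a real sequence and η ∈ ℝ such that (1/n) ∑_{j=1}^n ψ_j → η as n → ∞, and let G : [0,1] → ℝ be a Lipschitz function. Then for every t ∈ [0,1], (1/n) ∑_{j=1}^{[nt]} G(j/n) ψ_j → η ∫_0^t G(x) dx as n → ∞. -/
/-!
Write `ψ j = η + (ψ j - η)`. The `η`-part is a right-endpoint Riemann sum of `G`, which is within
`O(1/n)` of `∫₀ᵗ G` because `G` is Lipschitz. For the rest, Abel summation moves the weights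
`G (j/n)` onto the partial sums `S k = ∑_{j ≤ k} (ψ j - η) = o(k)`: the boundary term is at most
`sup |G| · |S ⌊nt⌋|`, and since consecutive weights differ by at most `K/n` the other term is at
most `(K/n) ∑_{k < ⌊nt⌋} |S k|`, which is `o(n)` by Cesàro averaging of `|S k| / k → 0`.
-/

open Filter Topology Finset
open scoped NNReal

theorem sum_Icc_one_by_parts (a e : ℕ → ℝ) (m : ℕ) :
    ∑ j ∈ Icc 1 m, a j * e j
      = a m * ∑ j ∈ Icc 1 m, e j - ∑ j ∈ Ico 1 m, (a (j + 1) - a j) * ∑ i ∈ Icc 1 j, e i := by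
  induction m with
  | zero => simp
  | succ m ih =>
    rcases m.eq_zero_or_pos with rfl | hm
    · simp
    rw [sum_Icc_succ_top (by omega), ih, sum_Ico_succ_top hm, sum_Icc_succ_top (by omega)]
    ring

theorem abs_sum_Icc_one_mul_le {a e : ℕ → ℝ} {m : ℕ} {B δ : ℝ} (hB : |a m| ≤ B)
    (hδ : ∀ j ∈ Ico 1 m, |a (j + 1) - a j| ≤ δ) :
    |∑ j ∈ Icc 1 m, a j * e j|
      ≤ B * |∑ j ∈ Icc 1 m, e j| + δ * ∑ j ∈ Ico 1 m, |∑ i ∈ Icc 1 j, e i| := by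
  rw [sum_Icc_one_by_parts, mul_sum (Ico 1 m)]
  refine (abs_sub _ _).trans (add_le_add ?_ ((abs_sum_le_sum_abs _ _).trans ?_))
  · rw [abs_mul]; exact mul_le_mul_of_nonneg_right hB (abs_nonneg _)
  · refine sum_le_sum fun j hj => ?_
    rw [abs_mul]; exact mul_le_mul_of_nonneg_right (hδ j hj) (abs_nonneg _)

theorem Filter.Tendsto.cesaro_Icc {v : ℕ → ℝ} {l : ℝ} (hv : Tendsto v atTop (𝓝 l)) :
    Tendsto (fun n : ℕ => (n : ℝ)⁻¹ * ∑ j ∈ Icc 1 n, v j) atTop (𝓝 l) := by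
  refine (hv.comp (tendsto_add_atTop_nat 1)).cesaro.congr fun n => ?_
  rw [← Ico_add_one_right_eq_Icc, sum_Ico_eq_sum_range]
  simp [add_comm]

theorem natCast_div_mem_Icc_of_le_floor {n j : ℕ} {t : ℝ} (ht : 0 ≤ t) (hj : j ≤ ⌊n * t⌋₊) :
    (j : ℝ) / n ∈ Set.Icc 0 t := by
  refine ⟨by positivity, div_le_of_le_mul₀ n.cast_nonneg ht ?_⟩
  rw [mul_comm]
  exact (Nat.cast_le.2 hj).trans (Nat.floor_le (by positivity))

theorem LipschitzOnWith.abs_mul_sub_integral_le {G : ℝ → ℝ} {K : ℝ≥0} {a b : ℝ} (hab : a ≤ b)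
    (hG : LipschitzOnWith K G (Set.Icc a b)) :
    |(b - a) * G b - ∫ x in a..b, G x| ≤ K * (b - a) ^ 2 := by
  have hint : IntervalIntegrable G MeasureTheory.volume a b :=
    hG.continuousOn.intervalIntegrable_of_Icc hab
  have hb : b ∈ Set.Icc a b := Set.right_mem_Icc.2 hab
  rw [← smul_eq_mul, ← intervalIntegral.integral_const,
    ← intervalIntegral.integral_sub intervalIntegrable_const hint]
  calc ‖∫ x in a..b, G b - G x‖ ≤ K * (b - a) * |b - a| := by
        refine intervalIntegral.norm_integral_le_of_norm_le_const fun x hx => ?_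
        rw [Set.uIoc_of_le hab] at hx
        have hx' : x ∈ Set.Icc a b := Set.Ioc_subset_Icc_self hx
        calc ‖G b - G x‖ ≤ K * dist b x := hG.dist_le_mul b hb x hx'
          _ ≤ K * (b - a) := by
            gcongr
            rw [Real.dist_eq, abs_of_nonneg (by linarith [hx'.2])]
            linarith [hx.1]
    _ = K * (b - a) ^ 2 := by rw [abs_of_nonneg (sub_nonneg.2 hab)]; ring

theorem LipschitzOnWith.abs_riemannSum_sub_integral_le {G : ℝ → ℝ} {K : ℝ≥0} {n M : ℕ}
    (hG : LipschitzOnWith K G (Set.Icc 0 ((M : ℝ) / n))) :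
    |(1 / (n : ℝ)) * ∑ j ∈ Icc 1 M, G ((j : ℝ) / n) - ∫ x in (0 : ℝ)..M / n, G x|
      ≤ K * M / n ^ 2 := by
  induction M with
  | zero => simp
  | succ M ih =>
    set x : ℝ := (M : ℝ) / n
    set y : ℝ := ((M + 1 : ℕ) : ℝ) / n
    have hxy : x ≤ y := div_le_div_of_nonneg_right (by simp) n.cast_nonneg
    have hstep : y - x = 1 / n := by simp only [x, y]; push_cast; ring
    have hG₀ : LipschitzOnWith K G (Set.Icc 0 x) := hG.mono (Set.Icc_subset_Icc_right hxy)
    have hG₁ : LipschitzOnWith K G (Set.Icc x y) :=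
      hG.mono (Set.Icc_subset_Icc_left (by positivity))
    rw [sum_Icc_succ_top (by omega), ← intervalIntegral.integral_add_adjacent_intervals
      (hG₀.continuousOn.intervalIntegrable_of_Icc (by positivity))
      (hG₁.continuousOn.intervalIntegrable_of_Icc hxy)]
    calc _ = |((1 / (n : ℝ)) * ∑ j ∈ Icc 1 M, G ((j : ℝ) / n) - ∫ x in (0 : ℝ)..x, G x)
          + ((y - x) * G y - ∫ x in x..y, G x)| := by rw [hstep]; congr 1; ring
      _ ≤ K * M / n ^ 2 + K * (y - x) ^ 2 :=
        (abs_add_le _ _).trans (add_le_add (ih hG₀) (hG₁.abs_mul_sub_integral_le hxy))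
      _ = K * (M + 1 : ℕ) / n ^ 2 := by rw [hstep]; push_cast; ring

theorem LipschitzOnWith.tendsto_riemannSum_floor {G : ℝ → ℝ} {K : ℝ≥0} {t : ℝ} (ht : 0 ≤ t)
    (hG : LipschitzOnWith K G (Set.Icc 0 t)) :
    Tendsto (fun n : ℕ => (1 / (n : ℝ)) * ∑ j ∈ Icc 1 ⌊(n : ℝ) * t⌋₊, G ((j : ℝ) / n))
      atTop (𝓝 (∫ x in (0 : ℝ)..t, G x)) := by
  obtain ⟨C, hC⟩ := isCompact_Icc.exists_bound_of_continuousOn hG.continuousOn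
  rw [← tendsto_sub_nhds_zero_iff]
  refine squeeze_zero_norm' ?_ (tendsto_const_div_atTop_nhds_zero_nat (K * t + C))
  filter_upwards [eventually_gt_atTop 0] with n hn
  have hn' : (0 : ℝ) < n := Nat.cast_pos.2 hn
  set m := ⌊(n : ℝ) * t⌋₊
  have hx : (m : ℝ) / n ∈ Set.Icc 0 t := natCast_div_mem_Icc_of_le_floor ht le_rfl
  have hgap : t - m / n ≤ 1 / n := by
    rw [sub_le_iff_le_add, ← add_div, le_div_iff₀ hn', mul_comm, add_comm]
    exact (Nat.lt_floor_add_one ((n : ℝ) * t)).le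
  have hint (a b : ℝ) (ha : 0 ≤ a) (hab : a ≤ b) (hb : b ≤ t) :
      IntervalIntegrable G MeasureTheory.volume a b :=
    (hG.continuousOn.mono (Set.Icc_subset_Icc ha hb)).intervalIntegrable_of_Icc hab
  have htail : |∫ x in (m / n : ℝ)..t, G x| ≤ C * (1 / n) := by
    rw [← Real.norm_eq_abs]
    refine (intervalIntegral.norm_integral_le_of_norm_le_const (C := C) fun x hx' => ?_).trans ?_
    · rw [Set.uIoc_of_le hx.2] at hx'
      exact hC x ⟨hx.1.trans hx'.1.le, hx'.2⟩
    · rw [abs_of_nonneg (sub_nonneg.2 hx.2)]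
      exact mul_le_mul_of_nonneg_left hgap ((norm_nonneg _).trans (hC t ⟨ht, le_rfl⟩))
  rw [← intervalIntegral.integral_add_adjacent_intervals (hint 0 _ le_rfl hx.1 hx.2)
    (hint _ t hx.1 hx.2 le_rfl), Real.norm_eq_abs]
  calc _ = |((1 / (n : ℝ)) * ∑ j ∈ Icc 1 m, G ((j : ℝ) / n) - ∫ x in (0 : ℝ)..m / n, G x)
        - ∫ x in (m / n : ℝ)..t, G x| := by ring_nf
    _ ≤ K * m / n ^ 2 + C * (1 / n) :=
      (abs_sub _ _).trans <| add_le_add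
        (hG.mono (Set.Icc_subset_Icc_right hx.2)).abs_riemannSum_sub_integral_le htail
    _ ≤ K * (n * t) / n ^ 2 + C * (1 / n) := by
      gcongr; exact Nat.floor_le (by positivity)
    _ = (K * t + C) / n := by field_simp

theorem LipschitzOnWith.tendsto_sum_mul_zero_of_partialSum_div_zero {e : ℕ → ℝ}
    (he : Tendsto (fun n : ℕ => (∑ j ∈ Icc 1 n, e j) / n) atTop (𝓝 0))
    {G : ℝ → ℝ} {K : ℝ≥0} {t : ℝ} (ht : 0 < t) (hG : LipschitzOnWith K G (Set.Icc 0 t)) :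
    Tendsto (fun n : ℕ => (1 / (n : ℝ)) * ∑ j ∈ Icc 1 ⌊(n : ℝ) * t⌋₊, G ((j : ℝ) / n) * e j)
      atTop (𝓝 0) := by
  obtain ⟨C, hC⟩ := isCompact_Icc.exists_bound_of_continuousOn hG.continuousOn
  have hC₀ : 0 ≤ C := (norm_nonneg _).trans (hC 0 ⟨le_rfl, ht.le⟩)
  set S : ℕ → ℝ := fun k => ∑ j ∈ Icc 1 k, e j
  set v : ℕ → ℝ := fun k => |S k| / k
  have hv : Tendsto v atTop (𝓝 0) := by simpa [v, abs_div] using he.abs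
  have hv₀ (k : ℕ) : 0 ≤ v k := by positivity
  have hSv (k : ℕ) : |S k| = k * v k := by
    rcases k.eq_zero_or_pos with rfl | hk
    · simp [S]
    · have : (k : ℝ) ≠ 0 := by positivity
      simp only [v]; field_simp
  set c : ℕ → ℝ := fun k => (k : ℝ)⁻¹ * ∑ j ∈ Icc 1 k, v j
  have hm : Tendsto (fun n : ℕ => ⌊(n : ℝ) * t⌋₊) atTop atTop :=
    tendsto_nat_floor_atTop.comp (tendsto_natCast_atTop_atTop.atTop_mul_const ht)
  have hlim := (((hv.const_mul (C * t)).add (hv.cesaro_Icc.const_mul (K * t ^ 2))).comp hm)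
  simp only [mul_zero, add_zero] at hlim
  refine squeeze_zero_norm' ?_ hlim
  filter_upwards [eventually_gt_atTop 0] with n hn
  set m := ⌊(n : ℝ) * t⌋₊
  have hgrid {j : ℕ} (hj : j ≤ m) : (j : ℝ) / n ∈ Set.Icc 0 t :=
    natCast_div_mem_Icc_of_le_floor ht.le hj
  have hstep (j : ℕ) (hj : j ∈ Ico 1 m) :
      |G (((j + 1 : ℕ) : ℝ) / n) - G ((j : ℝ) / n)| ≤ K / n := by
    rw [mem_Ico] at hj
    calc _ ≤ K * dist (((j + 1 : ℕ) : ℝ) / n) ((j : ℝ) / n) :=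
          hG.dist_le_mul _ (hgrid hj.2) _ (hgrid hj.2.le)
      _ = K / n := by
        rw [Real.dist_eq, ← sub_div, abs_div]; push_cast; simp [div_eq_mul_inv]
  have habel := abs_sum_Icc_one_mul_le (a := fun j : ℕ => G ((j : ℝ) / n)) (e := e)
    (hC _ (hgrid le_rfl)) hstep
  have hsum : ∑ j ∈ Ico 1 m, |S j| ≤ m * ∑ j ∈ Icc 1 m, v j := by
    rw [mul_sum]
    refine (sum_le_sum fun j hj => ?_).trans
      (sum_le_sum_of_subset_of_nonneg Ico_subset_Icc_self fun j _ _ => by positivity)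
    rw [hSv]
    exact mul_le_mul_of_nonneg_right (Nat.cast_le.2 (mem_Ico.1 hj).2.le) (hv₀ j)
  calc ‖(1 / (n : ℝ)) * ∑ j ∈ Icc 1 m, G ((j : ℝ) / n) * e j‖
      = 1 / n * |∑ j ∈ Icc 1 m, G ((j : ℝ) / n) * e j| := by
        rw [Real.norm_eq_abs, abs_mul, abs_of_pos (by positivity)]
    _ ≤ 1 / n * (C * (m * v m) + K / n * (m * ∑ j ∈ Icc 1 m, v j)) := by
        rw [← hSv]; gcongr; exact habel.trans (by gcongr)
    _ = C * (m / n) * v m + K * (m / n) ^ 2 * c m := by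
        simp only [c]; field_simp
    _ ≤ C * t * v m + K * t ^ 2 * c m := by
        have hc : 0 ≤ c m := by positivity
        have hmt : (m : ℝ) / n ≤ t := (hgrid le_rfl).2
        gcongr

/-- The Cesàro-type lemma (19)–(20) in the proof of **Theorem 9** of Peligrad–Utev,
"Invariance principle for stochastic processes with short memory": if
`(1/n) ∑_{j=1}^n ψ_j → η` and `G : [0,1] → ℝ` is Lipschitz, then for every `t ∈ [0,1]`,
`(1/n) ∑_{j=1}^{[nt]} G(j/n) ψ_j → η ∫_0^t G(x) dx`. -/
theorem stmt14
    (ψ : ℕ → ℝ) (η : ℝ)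
    (hψ : Tendsto (fun n : ℕ => (1 / (n : ℝ)) * ∑ j ∈ Finset.Icc 1 n, ψ j)
      atTop (𝓝 η))
    (G : ℝ → ℝ) (K : NNReal) (hG : LipschitzOnWith K G (Set.Icc 0 1)) :
    ∀ t ∈ Set.Icc (0 : ℝ) 1,
      Tendsto (fun n : ℕ =>
          (1 / (n : ℝ)) * ∑ j ∈ Finset.Icc 1 ⌊(n : ℝ) * t⌋₊, G ((j : ℝ) / n) * ψ j)
        atTop (𝓝 (η * ∫ x in (0 : ℝ)..t, G x)) := by
  rintro t ⟨ht₀, ht₁⟩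
  rcases ht₀.eq_or_lt with rfl | ht₀
  · simp
  have hGt : LipschitzOnWith K G (Set.Icc 0 t) := hG.mono (Set.Icc_subset_Icc_right ht₁)
  have he : Tendsto (fun n : ℕ => (∑ j ∈ Icc 1 n, (ψ j - η)) / n) atTop (𝓝 0) := by
    have h := hψ.sub_const η
    rw [sub_self] at h
    refine h.congr' ?_
    filter_upwards [eventually_gt_atTop 0] with n hn
    have : (n : ℝ) ≠ 0 := by positivity
    simp only [sum_sub_distrib, sum_const, Nat.card_Icc, add_tsub_cancel_right, nsmul_eq_mul]
    field_simp
  have hlim := ((hGt.tendsto_riemannSum_floor ht₀.le).const_mul η).add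
    (hGt.tendsto_sum_mul_zero_of_partialSum_div_zero he ht₀)
  rw [add_zero] at hlim
  refine hlim.congr fun n => ?_
  simp only [mul_sub, sum_sub_distrib, ← sum_mul]
  ring
end

section
/- For r ≥ 1 let n_r = 4^r and u_r = 1/(3 r^4 2^r), and define t_j = u_r for n_r < j ≤ n_{r+1} (r = 1, 2, …) and t_j = 0 for all integers j ≤ n_1 = 4 (in particular t_j = 0 for j ≤ 0). Then there exists a constant c > 0 such that for every r ≥ 1, ∑_{i∈ℤ} (∑_{k=1}^{n_{r+1}} t_{k−i})^2 ≥ c · n_{r+1}^2 / r^8; consequently, with σ_n^2 = ∑_{i∈ℤ} (∑_{k=1}^n t_{k−i})^2, there exists c' > 0 such that σ_n^2 ≥ c' n^2 / (log n)^8 for infinitely many n, so that σ_n^2 is not regularly varying of index 1. -/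
/-!
On the block `(4^r, 4^(r+1)]` the coefficients equal `u_r = 1/(3 r⁴ 2^r)`. For each of the
`4^r` shifts `0 < i ≤ 4^r`, at least `2·4^r` of the terms `t_{k-i}`, `1 ≤ k ≤ 4^(r+1)`, lie in
that block, so `σ²_{4^(r+1)} ≥ 4^r (2·4^r u_r)² = 16^(r+1)/(36 r⁸)`; with `n = 4^(r+1)` one has
`log n ≥ r`. If `σ²_{4n}/σ²_n → 4`, the ratio is eventually below `5`, so `σ²_{4^s} = O(5^s)`,
which is incompatible with the growth `16^s/s⁸`. All the series converge because the block sums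
of `t_j²` are `1/(3r⁸)`.
-/

open Filter Topology Finset

/-- `Var (∑_{k=1}^n X_k)` for the linear process `X_k = ∑_i t_i Y_{k-i}` driven by i.i.d.
standard Gaussian innovations. -/
noncomputable def partialSumVariance (t : ℤ → ℝ) (n : ℤ) : ℝ :=
  ∑' i : ℤ, (∑ k ∈ Icc 1 n, t (k - i)) ^ 2

lemma Int.cast_card_Ioc_of_le {a b : ℤ} (h : a ≤ b) : ((#(Ioc a b) : ℕ) : ℝ) = b - a := by
  exact_mod_cast Int.card_Ioc_of_le a b h

lemma summable_of_sum_Ioc_le {f : ℤ → ℝ} {a : ℤ} {C : ℝ} (hf : 0 ≤ f)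
    (h0 : ∀ j ≤ a, f j = 0) (hC : ∀ b, ∑ j ∈ Ioc a b, f j ≤ C) : Summable f := by
  refine summable_of_sum_le (c := C) hf fun s => ?_
  obtain ⟨b, hb⟩ := s.bddAbove
  calc ∑ j ∈ s, f j = ∑ j ∈ s with a < j, f j :=
        (sum_filter_of_ne fun j _ hj => not_le.1 fun h => hj (h0 j h)).symm
    _ ≤ ∑ j ∈ Ioc a b, f j :=
        sum_le_sum_of_subset_of_nonneg
          (fun j hj => mem_Ioc.2 ⟨(mem_filter.1 hj).2, hb (mem_filter.1 hj).1⟩)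
          fun j _ _ => hf j
    _ ≤ C := hC b

lemma summable_sq_sum_sub {t : ℤ → ℝ} (ht : Summable fun j => t j ^ 2) (s : Finset ℤ) :
    Summable fun i : ℤ => (∑ k ∈ s, t (k - i)) ^ 2 := by
  have hshift : Summable fun i : ℤ => ∑ k ∈ s, t (k - i) ^ 2 :=
    summable_sum fun k _ => ht.comp_injective sub_right_injective
  refine (hshift.mul_left (#s : ℝ)).of_nonneg_of_le (fun i => sq_nonneg _) fun i => ?_
  simpa using sq_sum_le_card_mul_sum_sq (s := s) (f := fun k => t (k - i))

lemma mul_le_sum_Icc_sub {t : ℤ → ℝ} (ht : 0 ≤ t) {a b i : ℤ} {u : ℝ}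
    (hu : ∀ j ∈ Ioc a b, t j = u) (ha : 0 ≤ a) (hi : 0 ≤ i) (hib : a + i ≤ b) :
    ((b : ℝ) - a - i) * u ≤ ∑ k ∈ Icc 1 b, t (k - i) := by
  calc ((b : ℝ) - a - i) * u = ∑ k ∈ Ioc (a + i) b, t (k - i) := by
        rw [sum_congr rfl fun k hk => hu (k - i) (by simp only [mem_Ioc] at hk ⊢; omega),
          sum_const, nsmul_eq_mul, Int.cast_card_Ioc_of_le hib]
        push_cast; ring
    _ ≤ ∑ k ∈ Icc 1 b, t (k - i) :=
        sum_le_sum_of_subset_of_nonneg (fun k hk => by simp only [mem_Ioc, mem_Icc] at hk ⊢; omega)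
          fun k _ _ => ht _

lemma exists_eventually_le_mul_pow {x : ℕ → ℝ} {q : ℝ} (hq : 0 < q)
    (h : ∀ᶠ s in atTop, x (s + 1) ≤ q * x s) : ∃ C, ∀ᶠ s in atTop, x s ≤ C * q ^ s := by
  obtain ⟨s₀, hs₀⟩ := eventually_atTop.1 h
  refine ⟨x s₀ / q ^ s₀, eventually_atTop.2 ⟨s₀, fun s hs => ?_⟩⟩
  obtain ⟨m, rfl⟩ := Nat.exists_eq_add_of_le hs
  have := le_geom (u := fun m => x (s₀ + m)) hq.le m fun k _ => hs₀ (s₀ + k) (by omega)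
  calc x (s₀ + m) ≤ q ^ m * x s₀ := this
    _ = x s₀ / q ^ s₀ * q ^ (s₀ + m) := by field_simp; ring

lemma not_eventually_mul_pow_le_mul_pow {a b c C : ℝ} (k : ℕ) (hb : 0 < b) (hab : b < a)
    (hc : 0 < c) : ¬ ∀ᶠ s : ℕ in atTop, c * a ^ s ≤ C * (s : ℝ) ^ k * b ^ s := by
  intro h
  have hρ : 1 < a / b := (one_lt_div hb).2 hab
  have hbig : (fun s : ℕ => (a / b) ^ s) =O[atTop] fun s : ℕ => (s : ℝ) ^ k := by
    refine Asymptotics.IsBigO.of_bound (C / c) (h.mono fun s hs => ?_)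
    rw [Real.norm_of_nonneg (by positivity), Real.norm_of_nonneg (by positivity), div_pow,
      div_le_iff₀ (pow_pos hb s), div_mul_eq_mul_div, div_mul_eq_mul_div, le_div_iff₀ hc]
    linarith
  exact Asymptotics.isLittleO_irrefl (Frequently.of_forall fun s => by positivity)
    (hbig.trans_isLittleO (isLittleO_pow_const_const_pow_of_one_lt k hρ))

structure PeligradUtevCoeffs (t : ℤ → ℝ) : Prop where
  eq_zero_of_le_four : ∀ j : ℤ, j ≤ 4 → t j = 0
  eq_of_mem_block : ∀ r : ℕ, 1 ≤ r → ∀ j : ℤ, (4 : ℤ) ^ r < j → j ≤ (4 : ℤ) ^ (r + 1) →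
    t j = 1 / (3 * (r : ℝ) ^ 4 * 2 ^ r)

lemma Int.exists_mem_Ioc_four_pow {j : ℤ} (hj : 4 < j) :
    ∃ r : ℕ, 1 ≤ r ∧ j ∈ Ioc ((4 : ℤ) ^ r) (4 ^ (r + 1)) := by
  lift j - 1 to ℕ using (by omega) with m hm
  refine ⟨Nat.log 4 m, Nat.log_pos (by norm_num) (by omega), mem_Ioc.2 ⟨?_, ?_⟩⟩
  · have : ((4 ^ Nat.log 4 m : ℕ) : ℤ) ≤ m := by exact_mod_cast Nat.pow_log_le_self 4 (by omega)
    push_cast at this; omega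
  · have : (m : ℤ) < (4 ^ (Nat.log 4 m + 1) : ℕ) := by
      exact_mod_cast Nat.lt_pow_succ_log_self (by norm_num) m
    push_cast at this; omega

namespace PeligradUtevCoeffs

variable {t : ℤ → ℝ} (h : PeligradUtevCoeffs t)
include h

lemma nonneg : 0 ≤ t := fun j => by
  show 0 ≤ t j
  rcases le_or_gt j 4 with hj | hj
  · rw [h.eq_zero_of_le_four j hj]
  · obtain ⟨r, hr, hjr⟩ := Int.exists_mem_Ioc_four_pow hj
    rw [mem_Ioc] at hjr
    rw [h.eq_of_mem_block r hr j hjr.1 hjr.2]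
    positivity

lemma sum_sq_block {r : ℕ} (hr : 1 ≤ r) :
    ∑ j ∈ Ioc ((4 : ℤ) ^ r) (4 ^ (r + 1)), t j ^ 2 = 1 / (3 * (r : ℝ) ^ 8) := by
  rw [sum_congr rfl fun j hj => by
      rw [h.eq_of_mem_block r hr j (mem_Ioc.1 hj).1 (mem_Ioc.1 hj).2],
    sum_const, nsmul_eq_mul, Int.cast_card_Ioc_of_le (pow_le_pow_right₀ (by norm_num) r.le_succ)]
  have h4 : (4 : ℝ) ^ r = 2 ^ r * 2 ^ r := by rw [← mul_pow]; norm_num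
  push_cast
  rw [pow_succ (4 : ℝ) r, h4]
  field_simp
  ring

lemma sum_sq_Ioc_four (R : ℕ) :
    ∑ j ∈ Ioc (4 : ℤ) (4 ^ (R + 1)), t j ^ 2 = ∑ r ∈ Icc 1 R, 1 / (3 * (r : ℝ) ^ 8) := by
  induction R with
  | zero => simp
  | succ R ih =>
    rw [← Ioc_union_Ioc_eq_Ioc (le_self_pow₀ (by norm_num) (by omega))
        (pow_le_pow_right₀ (by norm_num) (R + 1).le_succ),
      sum_union (Ioc_disjoint_Ioc_of_le le_rfl), ih, h.sum_sq_block (by omega),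
      Finset.sum_Icc_succ_top (by omega)]

lemma summable_sq : Summable fun j => t j ^ 2 := by
  have hC : Summable fun r : ℕ => 1 / (3 * (r : ℝ) ^ 8) := by
    refine ((Real.summable_one_div_nat_pow.2 (by norm_num : 1 < 8)).div_const 3).congr fun r => ?_
    rw [div_div, mul_comm]
  refine summable_of_sum_Ioc_le (a := 4) (C := ∑' r : ℕ, 1 / (3 * (r : ℝ) ^ 8))
    (fun j => sq_nonneg (t j)) (fun j hj => by simp [h.eq_zero_of_le_four j hj]) fun b => ?_
  calc ∑ j ∈ Ioc 4 b, t j ^ 2 ≤ ∑ j ∈ Ioc 4 (4 ^ (b.toNat + 1)), t j ^ 2 := by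
        refine sum_le_sum_of_subset_of_nonneg (Ioc_subset_Ioc_right ?_) fun _ _ _ => sq_nonneg _
        have : ((b.toNat : ℕ) : ℤ) < (4 ^ (b.toNat + 1) : ℕ) := by
          exact_mod_cast (Nat.lt_pow_self (by norm_num)).trans (Nat.pow_lt_pow_succ (by norm_num))
        push_cast at this; omega
    _ = ∑ r ∈ Icc 1 b.toNat, 1 / (3 * (r : ℝ) ^ 8) := h.sum_sq_Ioc_four _
    _ ≤ ∑' r : ℕ, 1 / (3 * (r : ℝ) ^ 8) := hC.sum_le_tsum _ fun _ _ => by positivity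

lemma partialSumVariance_four_pow_ge {r : ℕ} (hr : 1 ≤ r) :
    1 / 36 * ((4 : ℝ) ^ (r + 1)) ^ 2 / (r : ℝ) ^ 8 ≤ partialSumVariance t (4 ^ (r + 1)) := by
  set u : ℝ := 1 / (3 * (r : ℝ) ^ 4 * 2 ^ r) with hu
  have hu0 : 0 ≤ u := by positivity
  -- For `0 < i ≤ 4^r`, at least `2·4^r` of the shifted coefficients lie in block `r`.
  have hinner : ∀ i ∈ Ioc 0 ((4 : ℤ) ^ r),
      2 * 4 ^ r * u ≤ ∑ k ∈ Icc 1 ((4 : ℤ) ^ (r + 1)), t (k - i) := by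
    intro i hi
    rw [mem_Ioc] at hi
    have hi' : (i : ℝ) ≤ 4 ^ r := by exact_mod_cast hi.2
    calc 2 * 4 ^ r * u ≤ (((4 ^ (r + 1) : ℤ) : ℝ) - (4 ^ r : ℤ) - i) * u := by
          gcongr; push_cast; rw [pow_succ]; linarith
      _ ≤ _ := mul_le_sum_Icc_sub h.nonneg
          (fun j hj => h.eq_of_mem_block r hr j (mem_Ioc.1 hj).1 (mem_Ioc.1 hj).2)
          (by positivity) hi.1.le (by rw [pow_succ]; omega)
  calc 1 / 36 * ((4 : ℝ) ^ (r + 1)) ^ 2 / (r : ℝ) ^ 8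
      = ∑ i ∈ Ioc 0 ((4 : ℤ) ^ r), (2 * 4 ^ r * u) ^ 2 := by
        have h4 : (4 : ℝ) ^ r = 2 ^ r * 2 ^ r := by rw [← mul_pow]; norm_num
        rw [sum_const, nsmul_eq_mul, Int.cast_card_Ioc_of_le (by positivity), hu]
        push_cast
        rw [pow_succ (4 : ℝ) r, h4]
        field_simp
        ring
    _ ≤ ∑ i ∈ Ioc 0 ((4 : ℤ) ^ r), (∑ k ∈ Icc 1 ((4 : ℤ) ^ (r + 1)), t (k - i)) ^ 2 :=
        sum_le_sum fun i hi => pow_le_pow_left₀ (by positivity) (hinner i hi) 2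
    _ ≤ partialSumVariance t (4 ^ (r + 1)) :=
        (summable_sq_sum_sub h.summable_sq _).sum_le_tsum _ fun _ _ => sq_nonneg _

lemma exists_partialSumVariance_ge_div_log_pow (N : ℕ) :
    ∃ n : ℕ, N ≤ n ∧ 1 / 36 * (n : ℝ) ^ 2 / Real.log n ^ 8 ≤ partialSumVariance t n := by
  refine ⟨4 ^ (N + 2), (Nat.lt_pow_self (by norm_num)).le.trans
    (Nat.pow_le_pow_right (by norm_num) (by omega)), ?_⟩
  have hlog4 : 1 ≤ Real.log 4 := by
    rw [Real.le_log_iff_exp_le (by norm_num)]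
    exact Real.exp_one_lt_d9.le.trans (by norm_num)
  have hlog : (N : ℝ) + 1 ≤ Real.log (4 ^ (N + 2)) := by
    rw [Real.log_pow]
    push_cast
    nlinarith
  calc 1 / 36 * ((4 ^ (N + 2) : ℕ) : ℝ) ^ 2 / Real.log ((4 ^ (N + 2) : ℕ) : ℝ) ^ 8
      ≤ 1 / 36 * ((4 : ℝ) ^ (N + 1 + 1)) ^ 2 / ((N + 1 : ℕ) : ℝ) ^ 8 := by
        push_cast
        gcongr
    _ ≤ partialSumVariance t (4 ^ (N + 1 + 1)) := h.partialSumVariance_four_pow_ge (by omega)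
    _ = partialSumVariance t ((4 ^ (N + 2) : ℕ) : ℤ) := by push_cast; rfl

lemma not_tendsto_partialSumVariance_ratio_four :
    ¬ Tendsto (fun n : ℕ => partialSumVariance t (4 * n) / partialSumVariance t n)
      atTop (𝓝 4) := by
  intro H
  set x : ℕ → ℝ := fun s => partialSumVariance t (4 ^ (s + 1))
  have hlow : ∀ s : ℕ, 1 ≤ s → 16 / 36 * 16 ^ s ≤ (s : ℝ) ^ 8 * x s := fun s hs => by
    have := h.partialSumVariance_four_pow_ge hs
    rw [div_le_iff₀ (by positivity)] at this
    have h16 : ((4 : ℝ) ^ (s + 1)) ^ 2 = 16 * 16 ^ s := by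
      rw [← pow_mul, mul_comm, pow_mul, pow_succ]; norm_num; ring
    linarith
  have hstep : ∀ᶠ s in atTop, x (s + 1) ≤ 5 * x s := by
    have hpow : Tendsto (fun s : ℕ => 4 ^ (s + 1)) atTop atTop :=
      (tendsto_pow_atTop_atTop_of_one_lt (by norm_num)).comp (tendsto_add_atTop_nat 1)
    filter_upwards [hpow.eventually (H.eventually_lt_const (by norm_num : (4 : ℝ) < 5)),
      eventually_ge_atTop 1] with s hs hs1
    have hpos : 0 < x s :=
      pos_of_mul_pos_right ((by positivity : (0 : ℝ) < 16 / 36 * 16 ^ s).trans_le (hlow s hs1))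
        (by positivity)
    rw [show (4 : ℤ) * ((4 ^ (s + 1) : ℕ) : ℤ) = 4 ^ (s + 1 + 1) by push_cast; ring,
      Nat.cast_pow, Nat.cast_ofNat] at hs
    exact ((div_lt_iff₀ hpos).1 hs).le
  obtain ⟨C, hC⟩ := exists_eventually_le_mul_pow (by norm_num : (0 : ℝ) < 5) hstep
  refine not_eventually_mul_pow_le_mul_pow 8 (by norm_num : (0 : ℝ) < 5)
    (by norm_num : (5 : ℝ) < 16) (by norm_num : (0 : ℝ) < 16 / 36) (C := C) ?_
  filter_upwards [hC, eventually_ge_atTop 1] with s hs hs1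
  calc 16 / 36 * 16 ^ s ≤ (s : ℝ) ^ 8 * x s := hlow s hs1
    _ ≤ C * s ^ 8 * 5 ^ s := by nlinarith [pow_nonneg (Nat.cast_nonneg (α := ℝ) s) 8]

end PeligradUtevCoeffs

/-- Part (iv) of **Proposition 10** of Peligrad–Utev, "Invariance principle for stochastic
processes with short memory". With `n_r = 4^r`, `u_r = 1/(3 r⁴ 2^r)`, `t_j = u_r` for
`n_r < j ≤ n_{r+1}` and `t_j = 0` for `j ≤ 4`, the variance
`σ_n² = ∑_{i∈ℤ} (∑_{k=1}^n t_{k−i})²` of the associated linear process satisfies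
`σ_{n_{r+1}}² ≥ c n_{r+1}²/r⁸` for a positive constant `c`; consequently
`σ_n² ≥ c' n²/(log n)⁸` for infinitely many `n`, and `σ_n²` is not regularly varying of
index `1` (the ratio `σ_{[l·n]}²/σ_n²` does not tend to `l` for every `l > 0`). -/
theorem stmt16
    (t : ℤ → ℝ)
    (ht0 : ∀ j : ℤ, j ≤ 4 → t j = 0)
    (htr : ∀ r : ℕ, 1 ≤ r → ∀ j : ℤ, (4 : ℤ) ^ r < j → j ≤ (4 : ℤ) ^ (r + 1) →
      t j = 1 / (3 * (r : ℝ) ^ 4 * 2 ^ r)) :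
    (∃ c : ℝ, 0 < c ∧ ∀ r : ℕ, 1 ≤ r →
      c * ((4 : ℝ) ^ (r + 1)) ^ 2 / (r : ℝ) ^ 8 ≤
        ∑' i : ℤ, (∑ k ∈ Finset.Icc (1 : ℤ) (4 ^ (r + 1)), t (k - i)) ^ 2) ∧
    (∃ c' : ℝ, 0 < c' ∧ ∀ N : ℕ, ∃ n : ℕ, N ≤ n ∧
      c' * (n : ℝ) ^ 2 / Real.log n ^ 8 ≤
        ∑' i : ℤ, (∑ k ∈ Finset.Icc (1 : ℤ) (n : ℤ), t (k - i)) ^ 2) ∧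
    ¬ (∀ l : ℝ, 0 < l →
        Tendsto (fun n : ℕ =>
            (∑' i : ℤ, (∑ k ∈ Finset.Icc (1 : ℤ) ((⌊l * (n : ℝ)⌋₊ : ℤ)), t (k - i)) ^ 2) /
              (∑' i : ℤ, (∑ k ∈ Finset.Icc (1 : ℤ) (n : ℤ), t (k - i)) ^ 2))
          atTop (𝓝 l)) := by
  have h : PeligradUtevCoeffs t := ⟨ht0, htr⟩
  refine ⟨⟨1 / 36, by norm_num, fun r hr => h.partialSumVariance_four_pow_ge hr⟩,
    ⟨1 / 36, by norm_num, h.exists_partialSumVariance_ge_div_log_pow⟩, fun H => ?_⟩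
  refine h.not_tendsto_partialSumVariance_ratio_four ((H 4 four_pos).congr fun n => ?_)
  have hfloor : ⌊(4 : ℝ) * n⌋₊ = 4 * n := by exact_mod_cast Nat.floor_natCast (4 * n)
  simp only [hfloor, partialSumVariance]
  push_cast
  rfl
end
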